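/- Let u_{1:H}, u'_{1:H} be tuples of H vectors in the Euclidean unit ball of ℝ^d. Define ψ mapping such a tuple to the infinite sequence indexed by tuples (i_1,...,i_H) of finite index-sequences, with entry ∏_{h=1}^H 2^{−|i_h|/2} ∏_{k=1}^{|i_h|} u_{h, i_{h,k}}. Then ⟨ψ(u_{1:H}), ψ(u'_{1:H})⟩ = ∏_{h=1}^H 1/(1 − (1/2)⟨u_h, u'_h⟩); i.e., ψ induces the kernel K(u,u') = ∏_h (1 − ⟨u_h,u'_h⟩/2)^{−1}. -/

import Mathlib

/-- The feature map `ψ`: at index `ℓ = (i₁,…,i_H)` (a tuple of finite index-sequences over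
`[d]`), its entry is `∏_h 2^{−|i_h|/2} ∏_k u_{h, i_{h,k}}`. -/
noncomputable def psiMap {d H : ℕ} (u : Fin H → EuclideanSpace ℝ (Fin d))
    (ℓ : Fin H → List (Fin d)) : ℝ :=
  ∏ h, (Real.sqrt 2)⁻¹ ^ (ℓ h).length * ((ℓ h).map (u h)).prod

/-!
The product `ψ(u)_ℓ ψ(u')_ℓ` factors over `h` and over the letters of each word `ℓ h`, every
letter `i` contributing `q_h i = u_h i u'_h i / 2`. Grouping the words over `[d]` by length, the
words of length `n` contribute `(∑ i, q_h i)^n = (⟨u_h, u'_h⟩ / 2)^n`, so summing over all words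
is a geometric series with value `(1 - ⟨u_h, u'_h⟩ / 2)⁻¹`. By Cauchy–Schwarz `∑ i, |q_h i| ≤ 1/2`,
so all these series converge absolutely, which lets the sum over `Fin H → List (Fin d)` split
into the product over `h` of the sums over words.
-/

open Finset

section ListSeries

variable {ι : Type*} [Fintype ι]

theorem sum_prod_map_ofFn {R : Type*} [CommSemiring R] (q : ι → R) (n : ℕ) :
    ∑ t : Fin n → ι, ((List.ofFn t).map q).prod = (∑ i, q i) ^ n := by
  simp only [List.map_ofFn, List.prod_ofFn, Function.comp_apply]
  rw [← Fin.prod_const, Fintype.prod_sum]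

theorem summable_list_prod_map_of_nonneg {p : ι → ℝ} (hp : ∀ i, 0 ≤ p i) (h : ∑ i, p i < 1) :
    Summable fun l : List ι => (l.map p).prod := by
  rw [← List.equivSigmaTuple.symm.summable_iff]
  change Summable fun s : Σ n, Fin n → ι => ((List.ofFn s.2).map p).prod
  rw [summable_sigma_of_nonneg fun s => List.prod_nonneg (by simp [hp])]
  refine ⟨fun _ => .of_finite, ?_⟩
  simp only [tsum_fintype, sum_prod_map_ofFn]
  exact summable_geometric_of_lt_one (sum_nonneg fun i _ => hp i) h

variable {𝕜 : Type*} [NormedField 𝕜]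

theorem summable_norm_list_prod_map {q : ι → 𝕜} (h : ∑ i, ‖q i‖ < 1) :
    Summable fun l : List ι => ‖(l.map q).prod‖ := by
  simpa only [List.norm_prod, List.map_map, Function.comp_def] using
    summable_list_prod_map_of_nonneg (fun i => norm_nonneg (q i)) h

theorem tsum_list_prod_map [CompleteSpace 𝕜] {q : ι → 𝕜} (h : ∑ i, ‖q i‖ < 1) :
    ∑' l : List ι, (l.map q).prod = (1 - ∑ i, q i)⁻¹ := by
  have hsigma : Summable fun s : Σ n, Fin n → ι => ((List.ofFn s.2).map q).prod :=
    (List.equivSigmaTuple.symm.summable_iff.mpr (summable_norm_list_prod_map h).of_norm :)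
  calc ∑' l : List ι, (l.map q).prod
      = ∑' s : Σ n, Fin n → ι, ((List.ofFn s.2).map q).prod :=
        (List.equivSigmaTuple.symm.tsum_eq _).symm
    _ = ∑' n : ℕ, (∑ i, q i) ^ n := by
        simp only [hsigma.tsum_sigma, tsum_fintype, sum_prod_map_ofFn]
    _ = (1 - ∑ i, q i)⁻¹ := tsum_geometric_of_norm_lt_one ((norm_sum_le _ _).trans_lt h)

end ListSeries

section PiSeries

variable {R : Type*} [NormedCommRing R] {n : ℕ} {X : Fin n → Type*}

theorem summable_norm_prod_pi {F : ∀ h, X h → R} (hF : ∀ h, Summable fun x => ‖F h x‖) :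
    Summable fun g : (∀ h, X h) => ‖∏ h, F h (g h)‖ := by
  induction n with
  | zero => exact .of_finite
  | succ n ih =>
    rw [← (Fin.consEquiv X).summable_iff]
    simpa [Function.comp_def, Fin.consEquiv, Fin.prod_univ_succ] using
      (hF 0).mul_norm (ih fun h => hF h.succ)

theorem tsum_prod_pi [CompleteSpace R] {F : ∀ h, X h → R}
    (hF : ∀ h, Summable fun x => ‖F h x‖) :
    ∑' g : (∀ h, X h), ∏ h, F h (g h) = ∏ h, ∑' x, F h x := by
  induction n with
  | zero => simp
  | succ n ih =>
    rw [← (Fin.consEquiv X).tsum_eq, Fin.prod_univ_succ, ← ih fun h => hF h.succ,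
      tsum_mul_tsum_of_summable_norm (hF 0) (summable_norm_prod_pi fun h => hF h.succ)]
    simp [Fin.consEquiv, Fin.prod_univ_succ]

end PiSeries

theorem EuclideanSpace.sum_abs_mul_le_norm_mul_norm {ι : Type*} [Fintype ι]
    (v w : EuclideanSpace ℝ ι) : ∑ i, |v i * w i| ≤ ‖v‖ * ‖w‖ := by
  simpa only [abs_mul, sq_abs, EuclideanSpace.norm_eq, Real.norm_eq_abs] using
    Real.sum_mul_le_sqrt_mul_sqrt univ (|v ·|) (|w ·|)

theorem inv_sqrt_two_pow_mul_prod_map_mul {ι : Type*} (v w : ι → ℝ) (l : List ι) :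
    ((√2)⁻¹ ^ l.length * (l.map v).prod) * ((√2)⁻¹ ^ l.length * (l.map w).prod) =
      (l.map fun i => v i * w i / 2).prod := by
  induction l with
  | nil => simp
  | cons i l ih =>
    have hsq : (√2)⁻¹ * (√2)⁻¹ = (2 : ℝ)⁻¹ := by
      rw [← mul_inv, Real.mul_self_sqrt zero_le_two]
    simp only [List.map_cons, List.prod_cons, List.length_cons, pow_succ, ← ih]
    linear_combination v i * w i * ((√2)⁻¹ ^ l.length * (l.map v).prod) *
      ((√2)⁻¹ ^ l.length * (l.map w).prod) * hsq

theorem psiMap_mul_psiMap {d H : ℕ} (u u' : Fin H → EuclideanSpace ℝ (Fin d))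
    (ℓ : Fin H → List (Fin d)) :
    psiMap u ℓ * psiMap u' ℓ = ∏ h, ((ℓ h).map fun i => u h i * u' h i / 2).prod := by
  rw [psiMap, psiMap, ← prod_mul_distrib]
  exact prod_congr rfl fun h _ => inv_sqrt_two_pow_mul_prod_map_mul (u h) (u' h) (ℓ h)

theorem psiMap_kernel (d H : ℕ) (u u' : Fin H → EuclideanSpace ℝ (Fin d))
    (hu : ∀ h, ‖u h‖ ≤ 1) (hu' : ∀ h, ‖u' h‖ ≤ 1) :
    ∑' (ℓ : Fin H → List (Fin d)), psiMap u ℓ * psiMap u' ℓ =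
      ∏ h, (1 - (inner ℝ (u h) (u' h) : ℝ) / 2)⁻¹ := by
  have hsum_lt_one : ∀ h, ∑ i, ‖u h i * u' h i / 2‖ < 1 := fun h => by
    have hcs := EuclideanSpace.sum_abs_mul_le_norm_mul_norm (u h) (u' h)
    have hnorm := mul_le_one₀ (hu h) (norm_nonneg _) (hu' h)
    simp only [norm_div, Real.norm_eq_abs, abs_two, ← sum_div]
    linarith
  have hsummable (h : Fin H) :
      Summable fun l : List (Fin d) => ‖(l.map fun i => u h i * u' h i / 2).prod‖ :=
    summable_norm_list_prod_map (hsum_lt_one h)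
  rw [tsum_congr (psiMap_mul_psiMap u u'), tsum_prod_pi hsummable]
  refine prod_congr rfl fun h _ => ?_
  rw [tsum_list_prod_map (hsum_lt_one h)]
  simp [PiLp.inner_apply, mul_comm, sum_div]
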